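/- Let $1\le p,q<\infty$ and $\phi\in W(L^{1,1})(\mathbb{R}^{d+1})$. Then for any sequence $c\in\ell^{p,q}(\mathbb{Z}^{d+1})$, the function $f=\sum_{k_1\in\mathbb{Z}}\sum_{k_2\in\mathbb{Z}^d}c(k_1,k_2)\phi(\cdot-k_1,\cdot-k_2)$ belongs to $L^{p,q}(\mathbb{R}^{d+1})$ and $\|f\|_{L^{p,q}}\le \|c\|_{\ell^{p,q}}\|\phi\|_{W(L^{1,1})}$. -/

import Mathlib

open MeasureTheory ENNReal Filter Topology

noncomputable section

/-- The domain `ℝ × ℝ^d`. -/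
abbrev Dom (d : ℕ) := ℝ × (Fin d → ℝ)

/-- The mixed Wiener amalgam norm `‖g‖_{W(L^{1,1})}`. -/
def WNorm (d : ℕ) {E : Type*} [SeminormedAddGroup E] (g : Dom d → E) : ℝ≥0∞ :=
  ∑' n : ℤ, ⨆ x ∈ Set.Icc (0:ℝ) 1,
    ∑' l : Fin d → ℤ, ⨆ y ∈ Set.Icc (0 : Fin d → ℝ) 1,
      (‖g (x + (n : ℝ), y + (fun i => (l i : ℝ)))‖₊ : ℝ≥0∞)

/-- The mixed Lebesgue norm `‖f‖_{L^{p,q}}`. -/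
def LpqNorm (d : ℕ) (p q : ℝ) {E : Type*} [SeminormedAddGroup E] (f : Dom d → E) : ℝ≥0∞ :=
  (∫⁻ x : ℝ, ((∫⁻ y : Fin d → ℝ, (‖f (x, y)‖₊ : ℝ≥0∞) ^ q) ^ (p / q))) ^ (1 / p)

/-- The mixed sequence norm `‖c‖_{ℓ^{p,q}}`. -/
def lpqNorm (d : ℕ) (p q : ℝ) {E : Type*} [SeminormedAddGroup E]
    (c : ℤ × (Fin d → ℤ) → E) : ℝ≥0∞ :=
  (∑' k1 : ℤ, (∑' k2 : Fin d → ℤ, (‖c (k1, k2)‖₊ : ℝ≥0∞) ^ q) ^ (p / q)) ^ (1 / p)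

/-- Convolution on `ℝ^{d+1}`. -/
def conv (d : ℕ) (f g : Dom d → ℂ) (x : Dom d) : ℂ :=
  ∫ y : Dom d, f y * g (x - y)

/-- The oscillation (modulus of continuity) of `φ` at scale `δ`. -/
def osc (d : ℕ) {E : Type*} [SeminormedAddGroup E] (δ : ℝ) (φ : Dom d → E) (x : Dom d) : ℝ :=
  ⨆ y : {y : Dom d // |y.1| ≤ δ ∧ Real.sqrt (∑ i, y.2 i ^ 2) ≤ δ},
    ‖φ (x + (y : Dom d)) - φ x‖

/-- The dilation `ψ_a = a^{-(d+1)} ψ(·/a)`. -/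
def scaleA (d : ℕ) (a : ℝ) (ψ : Dom d → ℂ) (x : Dom d) : ℂ :=
  (a ^ (d + 1) : ℝ)⁻¹ • ψ (x.1 / a, fun i => x.2 i / a)

/-- The involution `ψ^*(x) = conj (ψ(-x))`. -/
def starFn (d : ℕ) (ψ : Dom d → ℂ) (x : Dom d) : ℂ := starRingEnd ℂ (ψ (-x))

/-- The quasi-interpolant `Q_X f = ∑_{j,k} f(x_j,y_k) β_{j,k}`. -/
def QX {d : ℕ} {J : Type*} (xs : J → ℝ) (ys : J → Fin d → ℝ)
    (β : J → J → Dom d → ℝ) (f : Dom d → ℂ) (z : Dom d) : ℂ :=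
  ∑' jk : J × J, β jk.1 jk.2 z • f (xs jk.1, ys jk.2)

/-- A bounded uniform partition of unity associated to the balls `B_γ(x_j,y_k)`. -/
def IsBUPU {d : ℕ} {J : Type*} (xs : J → ℝ) (ys : J → Fin d → ℝ) (γ : ℝ)
    (β : J → J → Dom d → ℝ) : Prop :=
  (∀ j k z, 0 ≤ β j k z ∧ β j k z ≤ 1) ∧
  (∀ j k, Function.support (β j k) ⊆ Metric.ball ((xs j, ys k) : Dom d) γ) ∧
  (∀ z, ∑' jk : J × J, β jk.1 jk.2 z = 1)

/-- `X = {(x_j,y_k)}` is `γ₀`-dense in `ℝ^{d+1}`. -/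
def IsGammaDense {d : ℕ} {J : Type*} (xs : J → ℝ) (ys : J → Fin d → ℝ) (γ₀ : ℝ) : Prop :=
  ∀ γ > γ₀, ∀ z : Dom d, ∃ j k : J, z ∈ Metric.ball ((xs j, ys k) : Dom d) γ

/-- The function generated by coefficients `c` and generator `φ`. -/
def genFun {d : ℕ} (φ : Dom d → ℂ) (c : ℤ × (Fin d → ℤ) → ℂ) (z : Dom d) : ℂ :=
  ∑' k : ℤ × (Fin d → ℤ), c k • φ (z.1 - (k.1 : ℝ), z.2 - (fun i => (k.2 i : ℝ)))

/-- The function generated by several generators. -/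
def genFunM {d r : ℕ} (φ : Fin r → Dom d → ℂ) (c : Fin r → ℤ × (Fin d → ℤ) → ℂ)
    (z : Dom d) : ℂ :=
  ∑ i, genFun (φ i) (c i) z

/-- Membership in the multiply generated shift-invariant space `V_{p,q}(Φ)`. -/
def MemV {d r : ℕ} (p q : ℝ) (φ : Fin r → Dom d → ℂ) (f : Dom d → ℂ) : Prop :=
  ∃ c : Fin r → ℤ × (Fin d → ℤ) → ℂ, (∀ i, lpqNorm d p q (c i) < ⊤) ∧ f = genFunM φ c


/-! ### Auxiliary lemmas for the proof of Statement 1 -/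

theorem my_minkowski_fin {κ : Type*} [MeasurableSpace κ] [MeasurableSingletonClass κ] [Countable κ]
    {p : ℝ} (hp : 1 ≤ p) {ι : Type*} (s : Finset ι) (f : ι → κ → ℝ≥0∞) :
    (∑' k, (∑ i ∈ s, f i k) ^ p) ^ (1/p) ≤ ∑ i ∈ s, (∑' k, (f i k) ^ p) ^ (1/p) := by
  classical
  induction s using Finset.cons_induction with
  | empty =>
      have hp0 : (0:ℝ) < p := lt_of_lt_of_le one_pos hp
      simp [ENNReal.zero_rpow_of_pos hp0,
        ENNReal.zero_rpow_of_pos (by positivity : (0:ℝ) < 1/p), hp0]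
  | cons a t ha ih =>
      simp only [Finset.sum_cons]
      calc (∑' k, (f a k + ∑ i ∈ t, f i k) ^ p) ^ (1/p)
          ≤ (∑' k, (f a k) ^ p) ^ (1/p) + (∑' k, (∑ i ∈ t, f i k) ^ p) ^ (1/p) := by
            have := ENNReal.lintegral_Lp_add_le (μ := Measure.count (α := κ))
              (f := fun k => f a k) (g := fun k => ∑ i ∈ t, f i k)
              (measurable_of_countable _).aemeasurable (measurable_of_countable _).aemeasurable hp
            simpa [lintegral_count] using this
        _ ≤ _ := add_le_add le_rfl ih

theorem my_minkowski_tsum {κ : Type*} [MeasurableSpace κ] [MeasurableSingletonClass κ]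
    [Countable κ] {p : ℝ} (hp : 1 ≤ p) {ι : Type*} [Countable ι] (f : ι → κ → ℝ≥0∞) :
    (∑' k, (∑' i, f i k) ^ p) ^ (1/p) ≤ ∑' i, (∑' k, (f i k) ^ p) ^ (1/p) := by
  classical
  have hp0 : (0:ℝ) < p := lt_of_lt_of_le one_pos hp
  set T : ℝ≥0∞ := ∑' i, (∑' k, (f i k) ^ p) ^ (1/p) with hT
  have key : ∑' k, (∑' i, f i k) ^ p ≤ T ^ p := by
    have h1 : ∀ k, (∑' i, f i k) ^ p = ⨆ s : Finset ι, (∑ i ∈ s, f i k) ^ p := by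
      intro k
      rw [ENNReal.tsum_eq_iSup_sum]
      exact Monotone.map_iSup_of_continuousAt
        (ENNReal.continuous_rpow_const.continuousAt)
        (fun x y hxy => ENNReal.rpow_le_rpow hxy hp0.le)
        (by simp [ENNReal.zero_rpow_of_pos hp0])
    simp_rw [h1]
    rw [← lintegral_count]
    rw [lintegral_iSup_directed (fun s => (measurable_of_countable _).aemeasurable)]
    · refine iSup_le fun s => ?_
      rw [lintegral_count]
      have h2 : (∑' k, (∑ i ∈ s, f i k) ^ p) ^ (1/p) ≤ T := by
        refine (my_minkowski_fin hp s f).trans ?_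
        exact ENNReal.sum_le_tsum s
      calc ∑' k, (∑ i ∈ s, f i k) ^ p
          = ((∑' k, (∑ i ∈ s, f i k) ^ p) ^ (1/p)) ^ p := by
            rw [← ENNReal.rpow_mul, one_div, inv_mul_cancel₀ hp0.ne', ENNReal.rpow_one]
        _ ≤ T ^ p := ENNReal.rpow_le_rpow h2 hp0.le
    · intro s t
      exact ⟨s ∪ t,
        fun k => ENNReal.rpow_le_rpow
          (Finset.sum_le_sum_of_subset Finset.subset_union_left) hp0.le,
        fun k => ENNReal.rpow_le_rpow
          (Finset.sum_le_sum_of_subset Finset.subset_union_right) hp0.le⟩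
  calc (∑' k, (∑' i, f i k) ^ p) ^ (1/p)
      ≤ (T ^ p) ^ (1/p) := ENNReal.rpow_le_rpow key (by positivity)
    _ = T := by rw [← ENNReal.rpow_mul, mul_one_div_cancel hp0.ne', ENNReal.rpow_one]

/-- The discrete mixed `ℓ^{p,q}` norm of an `ℝ≥0∞`-valued sequence. -/
def mnorm' (d : ℕ) (p q : ℝ) (N : ℤ × (Fin d → ℤ) → ℝ≥0∞) : ℝ≥0∞ :=
  (∑' n : ℤ, (∑' l : Fin d → ℤ, N (n, l) ^ q) ^ (p/q)) ^ (1/p)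

theorem mnorm'_eq (d : ℕ) {p q : ℝ} (hq : 1 ≤ q) (N : ℤ × (Fin d → ℤ) → ℝ≥0∞) :
    mnorm' d p q N = (∑' n : ℤ, ((∑' l : Fin d → ℤ, N (n, l) ^ q) ^ (1/q)) ^ p) ^ (1/p) := by
  have hq0 : (0:ℝ) < q := lt_of_lt_of_le one_pos hq
  unfold mnorm'
  congr 1
  refine tsum_congr fun n => ?_
  rw [← ENNReal.rpow_mul, show (1/q) * p = p/q by field_simp]

theorem mnorm'_tsum_le (d : ℕ) {p q : ℝ} (hp : 1 ≤ p) (hq : 1 ≤ q)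
    {ι : Type*} [Countable ι] (F : ι → ℤ × (Fin d → ℤ) → ℝ≥0∞) :
    mnorm' d p q (fun k => ∑' i, F i k) ≤ ∑' i, mnorm' d p q (F i) := by
  have hp0 : (0:ℝ) < p := lt_of_lt_of_le one_pos hp
  have hq0 : (0:ℝ) < q := lt_of_lt_of_le one_pos hq
  simp_rw [mnorm'_eq d hq]
  have step1 : ∀ n : ℤ, (∑' l, (∑' i, F i (n, l)) ^ q) ^ (1/q)
      ≤ ∑' i, (∑' l, (F i (n, l)) ^ q) ^ (1/q) := fun n =>
    my_minkowski_tsum hq (fun i l => F i (n, l))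
  calc (∑' n : ℤ, ((∑' l, (∑' i, F i (n, l)) ^ q) ^ (1/q)) ^ p) ^ (1/p)
      ≤ (∑' n : ℤ, (∑' i, (∑' l, (F i (n, l)) ^ q) ^ (1/q)) ^ p) ^ (1/p) := by
        refine ENNReal.rpow_le_rpow (ENNReal.tsum_le_tsum fun n => ?_) (by positivity)
        exact ENNReal.rpow_le_rpow (step1 n) hp0.le
    _ ≤ ∑' i, (∑' n : ℤ, ((∑' l, (F i (n, l)) ^ q) ^ (1/q)) ^ p) ^ (1/p) :=
        my_minkowski_tsum hp (fun i n => (∑' l, (F i (n, l)) ^ q) ^ (1/q))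

theorem mnorm'_smul (d : ℕ) {p q : ℝ} (hp : 1 ≤ p) (hq : 1 ≤ q)
    (a : ℝ≥0∞) (N : ℤ × (Fin d → ℤ) → ℝ≥0∞) :
    mnorm' d p q (fun k => a * N k) = a * mnorm' d p q N := by
  have hp0 : (0:ℝ) < p := lt_of_lt_of_le one_pos hp
  have hq0 : (0:ℝ) < q := lt_of_lt_of_le one_pos hq
  unfold mnorm'
  simp_rw [ENNReal.mul_rpow_of_nonneg _ _ hq0.le, ENNReal.tsum_mul_left,
    ENNReal.mul_rpow_of_nonneg _ _ (by positivity : (0:ℝ) ≤ p/q), ← ENNReal.rpow_mul,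
    show q * (p/q) = p by field_simp, ENNReal.tsum_mul_left,
    ENNReal.mul_rpow_of_nonneg _ _ (by positivity : (0:ℝ) ≤ 1/p), ← ENNReal.rpow_mul,
    mul_one_div_cancel hp0.ne', ENNReal.rpow_one]

theorem mnorm'_translate (d : ℕ) (p q : ℝ) (N : ℤ × (Fin d → ℤ) → ℝ≥0∞)
    (k : ℤ × (Fin d → ℤ)) :
    mnorm' d p q (fun m => N (m.1 - k.1, m.2 - k.2)) = mnorm' d p q N := by
  unfold mnorm'
  congr 1
  calc ∑' n : ℤ, (∑' l : Fin d → ℤ, N (n - k.1, l - k.2) ^ q) ^ (p/q)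
      = ∑' n : ℤ, (∑' l : Fin d → ℤ, N (n - k.1, l) ^ q) ^ (p/q) :=
        tsum_congr fun n =>
          congrArg (· ^ (p/q)) ((Equiv.subRight k.2).tsum_eq (fun l => N (n - k.1, l) ^ q))
    _ = ∑' n : ℤ, (∑' l : Fin d → ℤ, N (n, l) ^ q) ^ (p/q) :=
        (Equiv.subRight k.1).tsum_eq (fun n => (∑' l : Fin d → ℤ, N (n, l) ^ q) ^ (p/q))

theorem mnorm'_young (d : ℕ) {p q : ℝ} (hp : 1 ≤ p) (hq : 1 ≤ q)
    (w N : ℤ × (Fin d → ℤ) → ℝ≥0∞) :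
    mnorm' d p q (fun m => ∑' k, w k * N (m.1 - k.1, m.2 - k.2))
      ≤ (∑' k, w k) * mnorm' d p q N := by
  calc mnorm' d p q (fun m => ∑' k, w k * N (m.1 - k.1, m.2 - k.2))
      ≤ ∑' k, mnorm' d p q (fun m => w k * N (m.1 - k.1, m.2 - k.2)) :=
        mnorm'_tsum_le d hp hq _
    _ = ∑' k, w k * mnorm' d p q N := by
        refine tsum_congr fun k => ?_
        rw [mnorm'_smul d hp hq, mnorm'_translate d p q N k]
    _ = (∑' k, w k) * mnorm' d p q N := ENNReal.tsum_mul_right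

theorem my_tsum_nnnorm_bound {ι : Type*} (g : ι → ℂ) :
    (‖∑' i, g i‖₊ : ℝ≥0∞) ≤ ∑' i, (‖g i‖₊ : ℝ≥0∞) := by
  by_cases h : ∑' i, (‖g i‖₊ : ℝ≥0∞) = ⊤
  · simp [h]
  · have hs : Summable fun i => ‖g i‖₊ := ENNReal.tsum_coe_ne_top_iff_summable.mp h
    rw [← ENNReal.coe_tsum hs]
    exact ENNReal.coe_le_coe.mpr (nnnorm_tsum_le hs)

theorem my_tsum_lintegral_le {α : Type*} [MeasurableSpace α] (μ : Measure α)
    {ι : Type*} [Countable ι] (h : ι → α → ℝ≥0∞) :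
    ∑' i, ∫⁻ a, h i a ∂μ ≤ ∫⁻ a, ∑' i, h i a ∂μ := by
  classical
  rw [ENNReal.tsum_eq_iSup_sum]
  refine iSup_le fun s => ?_
  have hfin : ∑ i ∈ s, ∫⁻ a, h i a ∂μ ≤ ∫⁻ a, ∑ i ∈ s, h i a ∂μ := by
    induction s using Finset.cons_induction with
    | empty => simp
    | cons a t ha ih =>
        simp only [Finset.sum_cons]
        calc ∫⁻ x, h a x ∂μ + ∑ i ∈ t, ∫⁻ x, h i x ∂μ
            ≤ ∫⁻ x, h a x ∂μ + ∫⁻ x, ∑ i ∈ t, h i x ∂μ := add_le_add le_rfl ih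
          _ ≤ ∫⁻ x, (h a x + ∑ i ∈ t, h i x) ∂μ := le_lintegral_add _ _
  refine hfin.trans (lintegral_mono fun x => ?_)
  exact ENNReal.sum_le_tsum s

theorem my_shift_lintegral (g : ℝ → ℝ≥0∞) (n : ℝ) :
    ∫⁻ x in Set.Ico n (n+1), g x = ∫⁻ u in Set.Ico (0:ℝ) 1, g (u + n) := by
  have hmap : Measure.map (· + n) (volume : Measure ℝ) = volume := map_add_right_eq_self volume n
  have hpre : (· + n) ⁻¹' Set.Ico n (n+1) = Set.Ico (0:ℝ) 1 := by
    rw [Set.preimage_add_const_Ico]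
    norm_num
  calc ∫⁻ x in Set.Ico n (n+1), g x
      = ∫⁻ x in Set.Ico n (n+1), g x ∂(Measure.map (· + n) volume) := by rw [hmap]
    _ = ∫⁻ x, g x ∂(Measure.map (· + n) (volume.restrict ((· + n) ⁻¹' Set.Ico n (n+1)))) := by
        rw [Measure.restrict_map (measurable_add_const n) measurableSet_Ico]
    _ = ∫⁻ u, g (u + n) ∂(volume.restrict ((· + n) ⁻¹' Set.Ico n (n+1))) := by
        have := lintegral_map_equiv (μ := volume.restrict ((· + n) ⁻¹' Set.Ico n (n+1))) g
          (MeasurableEquiv.addRight n)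
        simpa using this
    _ = ∫⁻ u in Set.Ico (0:ℝ) 1, g (u + n) := by rw [hpre]

theorem my_setLIntegral_le_const {α : Type*} [MeasurableSpace α] (μ : Measure α)
    {s : Set α} (hs : MeasurableSet s) (g : α → ℝ≥0∞) (C : ℝ≥0∞)
    (h : ∀ x ∈ s, g x ≤ C) : ∫⁻ x in s, g x ∂μ ≤ C * μ s := by
  calc ∫⁻ x in s, g x ∂μ ≤ ∫⁻ _ in s, C ∂μ :=
        lintegral_mono_ae ((ae_restrict_iff' hs).2 (ae_of_all _ h))
    _ = C * μ s := by rw [setLIntegral_const]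

theorem my_iUnion_boxes (d : ℕ) :
    (⋃ l : Fin d → ℤ, Set.pi Set.univ fun i => Set.Ico ((l i : ℝ)) (l i + 1)) = Set.univ := by
  ext y
  simp only [Set.mem_iUnion, Set.mem_univ, iff_true, Set.mem_pi]
  exact ⟨fun i => ⌊y i⌋, fun i _ => ⟨Int.floor_le _, by push_cast; exact Int.lt_floor_add_one _⟩⟩

/-- For `1 ≤ p,q < ∞`, `φ ∈ W(L^{1,1})` and `c ∈ ℓ^{p,q}`, the function
`f = ∑ c(k) φ(·-k)` belongs to `L^{p,q}` and `‖f‖_{L^{p,q}} ≤ ‖c‖_{ℓ^{p,q}} ‖φ‖_{W(L^{1,1})}`. -/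
theorem statement1 (d : ℕ) (p q : ℝ) (hp : 1 ≤ p) (hq : 1 ≤ q)
    (φ : Dom d → ℂ) (hφm : AEStronglyMeasurable φ (volume : Measure (Dom d)))
    (hφW : WNorm d φ < ⊤)
    (c : ℤ × (Fin d → ℤ) → ℂ) (hc : lpqNorm d p q c < ⊤) :
    LpqNorm d p q (genFun φ c) ≤ lpqNorm d p q c * WNorm d φ ∧
      LpqNorm d p q (genFun φ c) < ⊤ := by
  have hp0 : (0:ℝ) < p := lt_of_lt_of_le one_pos hp
  have hq0 : (0:ℝ) < q := lt_of_lt_of_le one_pos hq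
  set N : ℤ × (Fin d → ℤ) → ℝ≥0∞ := fun k => (‖c k‖₊ : ℝ≥0∞) with hN
  have hlpq : lpqNorm d p q c = mnorm' d p q N := rfl
  set Wfn : ℤ × (Fin d → ℤ) → ℝ → ℝ≥0∞ := fun k u =>
    ⨆ y ∈ Set.Icc (0 : Fin d → ℝ) 1,
      (‖φ (u + (k.1 : ℝ), y + fun i => (k.2 i : ℝ))‖₊ : ℝ≥0∞) with hWfn
  have hWsum : ∀ u ∈ Set.Icc (0:ℝ) 1,
      (∑' k : ℤ × (Fin d → ℤ), Wfn k u) ≤ WNorm d φ := by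
    intro u hu
    rw [ENNReal.tsum_prod']
    refine ENNReal.tsum_le_tsum fun n => ?_
    exact le_biSup (fun x => ∑' l : Fin d → ℤ, ⨆ y ∈ Set.Icc (0 : Fin d → ℝ) 1,
      (‖φ (x + (n : ℝ), y + fun i => (l i : ℝ))‖₊ : ℝ≥0∞)) hu
  set Conv : ℤ × (Fin d → ℤ) → ℝ → ℝ≥0∞ := fun m u =>
    ∑' k : ℤ × (Fin d → ℤ), Wfn k u * N (m.1 - k.1, m.2 - k.2) with hConv
  have hpt : ∀ (n₀ : ℤ) (l₀ : Fin d → ℤ) (x : ℝ) (y : Fin d → ℝ),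
      (∀ i, (l₀ i : ℝ) ≤ y i ∧ y i < l₀ i + 1) →
      (‖genFun φ c (x, y)‖₊ : ℝ≥0∞) ≤ Conv (n₀, l₀) (x - (n₀:ℝ)) := by
    intro n₀ l₀ x y hy
    have step1 : (‖genFun φ c (x, y)‖₊ : ℝ≥0∞) ≤
        ∑' k : ℤ × (Fin d → ℤ),
          N k * (‖φ (x - (k.1:ℝ), y - fun i => (k.2 i : ℝ))‖₊ : ℝ≥0∞) := by
      refine (my_tsum_nnnorm_bound _).trans_eq ?_
      refine tsum_congr fun k => ?_
      rw [smul_eq_mul, nnnorm_mul, ENNReal.coe_mul]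
    refine step1.trans ?_
    have step2 : ∀ k : ℤ × (Fin d → ℤ),
        (‖φ (x - (k.1:ℝ), y - fun i => (k.2 i : ℝ))‖₊ : ℝ≥0∞) ≤
          Wfn (n₀ - k.1, l₀ - k.2) (x - (n₀:ℝ)) := by
      intro k
      have hmem : (y - fun i => (l₀ i : ℝ)) ∈ Set.Icc (0 : Fin d → ℝ) 1 := by
        constructor
        · intro i
          simpa [sub_nonneg] using (hy i).1
        · intro i
          have h2 := (hy i).2
          simp only [Pi.sub_apply, Pi.one_apply]
          linarith
      have h1 : x - (k.1:ℝ) = (x - (n₀:ℝ)) + ((n₀ - k.1 : ℤ) : ℝ) := by push_cast; ring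
      have h2 : (y - fun i => (l₀ i : ℝ)) + (fun i => (((l₀ - k.2) i : ℤ) : ℝ))
          = y - fun i => (k.2 i : ℝ) := by
        funext i
        simp only [Pi.add_apply, Pi.sub_apply]
        push_cast; ring
      have harg : ((x - (k.1:ℝ), y - fun i => (k.2 i : ℝ)) : Dom d) =
          ((x - (n₀:ℝ)) + ((n₀ - k.1 : ℤ) : ℝ),
            (y - fun i => (l₀ i : ℝ)) + fun i => (((l₀ - k.2) i : ℤ) : ℝ)) := by
        rw [h1, h2]
      rw [harg]
      exact le_biSup (f := fun y' : Fin d → ℝ =>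
        (‖φ ((x - (n₀:ℝ)) + ((n₀ - k.1 : ℤ) : ℝ),
          y' + fun i => (((l₀ - k.2) i : ℤ) : ℝ))‖₊ : ℝ≥0∞)) hmem
    refine (ENNReal.tsum_le_tsum fun k => mul_le_mul_right (step2 k) (N k)).trans ?_
    have hre : ∑' (a : ℤ × (Fin d → ℤ)), N a * Wfn (n₀ - a.1, l₀ - a.2) (x - (n₀:ℝ))
        = ∑' (k : ℤ × (Fin d → ℤ)), Wfn k (x - (n₀:ℝ)) * N (n₀ - k.1, l₀ - k.2) := by
      rw [← (Equiv.subLeft ((n₀, l₀) : ℤ × (Fin d → ℤ))).tsum_eq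
        (f := fun k : ℤ × (Fin d → ℤ) => Wfn k (x - (n₀:ℝ)) * N (n₀ - k.1, l₀ - k.2))]
      refine tsum_congr fun k => ?_
      have e1 : (Equiv.subLeft ((n₀, l₀) : ℤ × (Fin d → ℤ))) k = (n₀ - k.1, l₀ - k.2) := rfl
      rw [e1]
      show N k * Wfn (n₀ - k.1, l₀ - k.2) (x - (n₀:ℝ))
          = Wfn (n₀ - k.1, l₀ - k.2) (x - (n₀:ℝ)) * N (n₀ - (n₀ - k.1), l₀ - (l₀ - k.2))
      rw [show n₀ - (n₀ - k.1) = k.1 from by ring, show l₀ - (l₀ - k.2) = k.2 from by abel]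
      exact mul_comm _ _
    exact le_of_eq hre
  have hinner : ∀ (n₀ : ℤ) (x : ℝ),
      (∫⁻ y : Fin d → ℝ, (‖genFun φ c (x, y)‖₊ : ℝ≥0∞) ^ q)
        ≤ ∑' l₀ : Fin d → ℤ, Conv (n₀, l₀) (x - (n₀:ℝ)) ^ q := by
    intro n₀ x
    conv_lhs => rw [← Measure.restrict_univ
      (μ := (volume : Measure (Fin d → ℝ))), ← my_iUnion_boxes d]
    refine (lintegral_iUnion_le _ _).trans ?_
    refine ENNReal.tsum_le_tsum fun l₀ => ?_
    have hb : ∀ y ∈ Set.pi Set.univ fun i => Set.Ico ((l₀ i : ℝ)) (l₀ i + 1),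
        (‖genFun φ c (x, y)‖₊ : ℝ≥0∞) ^ q ≤ Conv (n₀, l₀) (x - (n₀:ℝ)) ^ q := by
      intro y hyy
      refine ENNReal.rpow_le_rpow (hpt n₀ l₀ x y fun i => ?_) hq0.le
      have := hyy i (Set.mem_univ i)
      exact ⟨this.1, this.2⟩
    refine (my_setLIntegral_le_const volume
      (MeasurableSet.univ_pi fun i => measurableSet_Ico) _ _ hb).trans ?_
    have hvol : volume (Set.pi Set.univ fun i => Set.Ico ((l₀ i : ℝ)) (l₀ i + 1)) = 1 := by
      rw [volume_pi_pi]
      simp [Real.volume_Ico]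
    rw [hvol, mul_one]
  have key : (∫⁻ x : ℝ, ((∫⁻ y : Fin d → ℝ, (‖genFun φ c (x, y)‖₊ : ℝ≥0∞) ^ q) ^ (p / q)))
      ≤ (lpqNorm d p q c * WNorm d φ) ^ p := by
    calc (∫⁻ x : ℝ, ((∫⁻ y : Fin d → ℝ, (‖genFun φ c (x, y)‖₊ : ℝ≥0∞) ^ q) ^ (p / q)))
        = ∫⁻ x in ⋃ n : ℤ, Set.Ico ((n:ℝ)) (n + 1),
            ((∫⁻ y : Fin d → ℝ, (‖genFun φ c (x, y)‖₊ : ℝ≥0∞) ^ q) ^ (p / q)) := by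
          rw [iUnion_Ico_intCast ℝ, Measure.restrict_univ]
      _ ≤ ∑' n₀ : ℤ, ∫⁻ x in Set.Ico ((n₀:ℝ)) (n₀ + 1),
            ((∫⁻ y : Fin d → ℝ, (‖genFun φ c (x, y)‖₊ : ℝ≥0∞) ^ q) ^ (p / q)) :=
          lintegral_iUnion_le _ _
      _ ≤ ∑' n₀ : ℤ, ∫⁻ x in Set.Ico ((n₀:ℝ)) (n₀ + 1),
            (∑' l₀ : Fin d → ℤ, Conv (n₀, l₀) (x - (n₀:ℝ)) ^ q) ^ (p / q) := by
          refine ENNReal.tsum_le_tsum fun n₀ => lintegral_mono_ae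
            ((ae_restrict_iff' measurableSet_Ico).2 (ae_of_all _ fun x _ => ?_))
          exact ENNReal.rpow_le_rpow (hinner n₀ x) (by positivity)
      _ = ∑' n₀ : ℤ, ∫⁻ u in Set.Ico (0:ℝ) 1,
            (∑' l₀ : Fin d → ℤ, Conv (n₀, l₀) ((u + (n₀:ℝ)) - (n₀:ℝ)) ^ q) ^ (p / q) :=
          tsum_congr fun n₀ => my_shift_lintegral
            (fun x => (∑' l₀ : Fin d → ℤ, Conv (n₀, l₀) (x - (n₀:ℝ)) ^ q) ^ (p / q)) (n₀:ℝ)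
      _ = ∑' n₀ : ℤ, ∫⁻ u in Set.Ico (0:ℝ) 1,
            (∑' l₀ : Fin d → ℤ, Conv (n₀, l₀) u ^ q) ^ (p / q) := by
          simp only [add_sub_cancel_right]
      _ ≤ ∫⁻ u in Set.Ico (0:ℝ) 1,
            ∑' n₀ : ℤ, (∑' l₀ : Fin d → ℤ, Conv (n₀, l₀) u ^ q) ^ (p / q) :=
          my_tsum_lintegral_le _ _
      _ ≤ (lpqNorm d p q c * WNorm d φ) ^ p * volume (Set.Ico (0:ℝ) 1) := by
          refine my_setLIntegral_le_const _ measurableSet_Ico _ _ fun u hu => ?_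
          have h1 : ∑' n₀ : ℤ, (∑' l₀ : Fin d → ℤ, Conv (n₀, l₀) u ^ q) ^ (p / q)
              = (mnorm' d p q (fun m => Conv m u)) ^ p := by
            rw [mnorm', ← ENNReal.rpow_mul, one_div, inv_mul_cancel₀ hp0.ne', ENNReal.rpow_one]
          rw [h1]
          refine ENNReal.rpow_le_rpow ?_ hp0.le
          refine (mnorm'_young d hp hq (fun k => Wfn k u) N).trans ?_
          rw [mul_comm, hlpq]
          exact mul_le_mul_right (hWsum u ⟨hu.1, hu.2.le⟩) _
      _ = (lpqNorm d p q c * WNorm d φ) ^ p := by simp [Real.volume_Ico]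
  have hle : LpqNorm d p q (genFun φ c) ≤ lpqNorm d p q c * WNorm d φ := by
    rw [LpqNorm]
    calc (∫⁻ x : ℝ, ((∫⁻ y : Fin d → ℝ, (‖genFun φ c (x, y)‖₊ : ℝ≥0∞) ^ q) ^ (p / q))) ^ (1/p)
        ≤ ((lpqNorm d p q c * WNorm d φ) ^ p) ^ (1/p) :=
          ENNReal.rpow_le_rpow key (by positivity)
      _ = lpqNorm d p q c * WNorm d φ := by
          rw [← ENNReal.rpow_mul, mul_one_div_cancel hp0.ne', ENNReal.rpow_one]
  exact ⟨hle, lt_of_le_of_lt hle (ENNReal.mul_lt_top hc hφW)⟩
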